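/- A 3-form α = β + γ with β: z → so(v) and γ ∈ Λ³z* on a 2-step nilpotent metric Lie algebra is a Killing 3-form if and only if (i) β(z)j(z') − β(z')j(z) + [j(z), β(z')] = j(γ(z,z')) for all z,z' ∈ z, and (ii) Σ_t j(z_t)x ∧ β(z_t)x = 0 for all x ∈ v, where {z_t} is an orthonormal basis of z. -/

import Mathlib

/-!
Split every vector into its central part (in `z`) and its horizontal part (in `v = zᗮ`). The
Koszul formula gives `∇_{z+x}(w+c) = ½[x,c] - ½(j(w)x + j(z)c)`, and `α(z+x, w+a, w'+b)` is read
off blockwise from `β` and `γ`. Substituting both, the Killing expression at `y = z+x` with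
arguments `w+a`, `w'+b` becomes one half of
`⟪β[x,b] x, a⟫ - ⟪β[x,a] x, b⟫ + ⟪D(z,z)a, b⟫ - ⟪D(w,w')x, x⟫ + ⟪D(z,w')x, a⟫ - ⟪D(z,w)x, b⟫`,
where `D(z,z')` is the difference of the two sides of (i), and the first two terms are the sum
in (ii) (expand `[x,a] ∈ z` in the orthonormal basis). Hence (i) and (ii) make it vanish.
Conversely, `w = w' = z = 0` isolates (ii), and `w = 0`, `b = 0` isolates `⟪D(z,w')x, a⟫`;
since `D(z,z')` kills `z` and maps into `v`, it vanishes once these pairings do.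
-/

open scoped RealInnerProductSpace

namespace AlternatingMap

section AddCommMonoid

variable {R M N : Type*} [CommSemiring R] [AddCommMonoid M] [Module R M] [AddCommMonoid N]
  [Module R N] (α : M [⋀^Fin 3]→ₗ[R] N) (a b c d : M)

theorem map_vec3_add_fst : α ![a + d, b, c] = α ![a, b, c] + α ![d, b, c] := by
  have h (x : M) : Function.update ![a, b, c] 0 x = ![x, b, c] := by ext i; fin_cases i <;> rfl
  simpa only [h] using α.map_update_add ![a, b, c] 0 a d

theorem map_vec3_add_snd : α ![a, b + d, c] = α ![a, b, c] + α ![a, d, c] := by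
  have h (x : M) : Function.update ![a, b, c] 1 x = ![a, x, c] := by ext i; fin_cases i <;> rfl
  simpa only [h] using α.map_update_add ![a, b, c] 1 b d

theorem map_vec3_add_thd : α ![a, b, c + d] = α ![a, b, c] + α ![a, b, d] := by
  have h (x : M) : Function.update ![a, b, c] 2 x = ![a, b, x] := by ext i; fin_cases i <;> rfl
  simpa only [h] using α.map_update_add ![a, b, c] 2 c d

end AddCommMonoid

section AddCommGroup

variable {R M N : Type*} [CommSemiring R] [AddCommMonoid M] [Module R M] [AddCommGroup N]
  [Module R N] (α : M [⋀^Fin 3]→ₗ[R] N) (a b c : M)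

theorem map_vec3_swap_fst_snd : α ![b, a, c] = -α ![a, b, c] := by
  have h : ![a, b, c] ∘ Equiv.swap 0 1 = ![b, a, c] := by
    ext i; fin_cases i <;> rfl
  simpa only [h] using α.map_swap ![a, b, c] (by decide : (0 : Fin 3) ≠ 1)

theorem map_vec3_swap_snd_thd : α ![a, c, b] = -α ![a, b, c] := by
  have h : ![a, b, c] ∘ Equiv.swap 1 2 = ![a, c, b] := by
    ext i; fin_cases i <;> rfl
  simpa only [h] using α.map_swap ![a, b, c] (by decide : (1 : Fin 3) ≠ 2)

theorem map_vec3_rotate : α ![c, a, b] = α ![a, b, c] := by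
  rw [map_vec3_swap_fst_snd, map_vec3_swap_snd_thd, neg_neg]

end AddCommGroup

end AlternatingMap

namespace OrthonormalBasis

variable {E F ι : Type*} [NormedAddCommGroup E] [InnerProductSpace ℝ E] [AddCommGroup F]
  [Module ℝ F] [Fintype ι] {K : Submodule ℝ E}

theorem sum_inner_smul_map_of_mem (b : OrthonormalBasis ι ℝ K) (f : E →ₗ[ℝ] F) {x : E}
    (hx : x ∈ K) : ∑ i, ⟪(b i : E), x⟫ • f (b i) = f x := by
  conv_rhs => rw [show x = ((⟨x, hx⟩ : K) : E) from rfl, ← b.sum_repr' ⟨x, hx⟩]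
  simp only [Submodule.coe_sum, Submodule.coe_smul, map_sum, map_smul, Submodule.coe_inner]

end OrthonormalBasis

namespace TwoStepNilpotent

variable {n : Type*} [NormedAddCommGroup n] [InnerProductSpace ℝ n]
  {l : n →ₗ[ℝ] n →ₗ[ℝ] n} {Z : Submodule ℝ n} {j : n → n →ₗ[ℝ] n} {nabla : n →ₗ[ℝ] n →ₗ[ℝ] n}
  {B γ : n →ₗ[ℝ] n →ₗ[ℝ] n} {α : AlternatingMap ℝ n ℝ (Fin 3)}

theorem bracket_eq_neg (hanti : ∀ x : n, l x x = 0) (x y : n) : l x y = -l y x :=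
  (LinearMap.IsAlt.neg hanti y x).symm

theorem bracket_eq_zero_of_mem_right (hanti : ∀ x : n, l x x = 0)
    (hZ : ∀ x : n, x ∈ Z ↔ ∀ y : n, l x y = 0) (u : n) {z : n} (hz : z ∈ Z) : l u z = 0 := by
  rw [bracket_eq_neg hanti, (hZ z).mp hz u, neg_zero]

theorem inner_j_apply_eq_neg (hanti : ∀ x : n, l x x = 0)
    (hj : ∀ z x y : n, ⟪j z x, y⟫ = ⟪z, l x y⟫) (z x y : n) : ⟪j z x, y⟫ = -⟪x, j z y⟫ := by
  rw [real_inner_comm (j z y), hj, hj, bracket_eq_neg hanti x y, inner_neg_right]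

theorem j_zero (hj : ∀ z x y : n, ⟪j z x, y⟫ = ⟪z, l x y⟫) : j 0 = 0 := by
  ext x
  exact ext_inner_right ℝ fun y => by
    rw [hj, inner_zero_left, LinearMap.zero_apply, inner_zero_left]

theorem j_apply_eq_zero_of_mem (hZ : ∀ x : n, x ∈ Z ↔ ∀ y : n, l x y = 0)
    (hj : ∀ z x y : n, ⟪j z x, y⟫ = ⟪z, l x y⟫) (z : n) {w : n} (hw : w ∈ Z) : j z w = 0 :=
  ext_inner_right ℝ fun y => by rw [hj, (hZ w).mp hw y, inner_zero_right, inner_zero_left]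

theorem j_apply_mem_orthogonal (hanti : ∀ x : n, l x x = 0)
    (hZ : ∀ x : n, x ∈ Z ↔ ∀ y : n, l x y = 0) (hj : ∀ z x y : n, ⟪j z x, y⟫ = ⟪z, l x y⟫)
    (z x : n) : j z x ∈ Zᗮ :=
  (Submodule.mem_orthogonal' Z _).mpr fun u hu => by
    rw [hj, bracket_eq_zero_of_mem_right hanti hZ x hu, inner_zero_right]

theorem nabla_add_add (hanti : ∀ x : n, l x x = 0) (hZ : ∀ x : n, x ∈ Z ↔ ∀ y : n, l x y = 0)
    (h2 : ∀ x y : n, l x y ∈ Z) (hj : ∀ z x y : n, ⟪j z x, y⟫ = ⟪z, l x y⟫)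
    (hnab : ∀ x y w : n, 2 * ⟪nabla x y, w⟫ = ⟪l x y, w⟫ + ⟪l w x, y⟫ + ⟪l w y, x⟫)
    ⦃z w x c : n⦄ (hz : z ∈ Z) (hw : w ∈ Z) (hx : x ∈ Zᗮ) (hc : c ∈ Zᗮ) :
    nabla (z + x) (w + c) = (2⁻¹ : ℝ) • l x c + -(2⁻¹ : ℝ) • (j w x + j z c) := by
  refine ext_inner_right ℝ fun u => ?_
  have inner_bracket {v y v' y' : n} (hv : v ∈ Z) (hv' : v' ∈ Z) (hy' : y' ∈ Zᗮ) :
      ⟪l u (v' + y), v + y'⟫ = -⟪j v y, u⟫ := by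
    rw [map_add, bracket_eq_zero_of_mem_right hanti hZ u hv', zero_add, inner_add_right,
      Submodule.inner_right_of_mem_orthogonal (h2 u y) hy', add_zero, real_inner_comm,
      bracket_eq_neg hanti, inner_neg_right, hj]
  have bracket : l (z + x) (w + c) = l x c := by
    simp only [map_add, LinearMap.add_apply, (hZ z).mp hz,
      bracket_eq_zero_of_mem_right hanti hZ _ hw, zero_add]
  have koszul := hnab (z + x) (w + c) u
  rw [bracket, inner_bracket hw hz hc, inner_bracket hz hw hx] at koszul
  simp only [inner_add_left, real_inner_smul_left]
  linarith

theorem alternatingMap_add_add_add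
    (hα3 : ∀ x ∈ Zᗮ, ∀ y ∈ Zᗮ, ∀ w ∈ Zᗮ, α ![x, y, w] = 0)
    (hα1 : ∀ x ∈ Zᗮ, ∀ z ∈ Z, ∀ z' ∈ Z, α ![x, z, z'] = 0)
    (hα2 : ∀ x ∈ Zᗮ, ∀ y ∈ Zᗮ, ∀ z ∈ Z, α ![x, y, z] = ⟪B z x, y⟫)
    (hα0 : ∀ z ∈ Z, ∀ z' ∈ Z, ∀ z'' ∈ Z, α ![z, z', z''] = ⟪γ z z', z''⟫)
    ⦃z x z' a z'' b : n⦄ (hz : z ∈ Z) (hx : x ∈ Zᗮ) (hz' : z' ∈ Z) (ha : a ∈ Zᗮ)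
    (hz'' : z'' ∈ Z) (hb : b ∈ Zᗮ) :
    α ![z + x, z' + a, z'' + b] = ⟪B z'' x, a⟫ - ⟪B z' x, b⟫ + ⟪B z a, b⟫ + ⟪γ z z', z''⟫ := by
  simp only [AlternatingMap.map_vec3_add_fst, AlternatingMap.map_vec3_add_snd,
    AlternatingMap.map_vec3_add_thd]
  rw [hα0 z hz z' hz' z'' hz'', ← α.map_vec3_rotate z z' b, hα1 b hb z hz z' hz',
    α.map_vec3_swap_fst_snd a z z'', hα1 a ha z hz z'' hz'', α.map_vec3_rotate a b z,
    hα2 a ha b hb z hz, hα1 x hx z' hz' z'' hz'', α.map_vec3_swap_snd_thd x b z',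
    hα2 x hx b hb z' hz', hα2 x hx a ha z'' hz'', hα3 x hx a ha b hb]
  ring

def killingDefect (B : n →ₗ[ℝ] n →ₗ[ℝ] n) (j : n → n →ₗ[ℝ] n) (γ : n →ₗ[ℝ] n →ₗ[ℝ] n)
    (z z' : n) : n →ₗ[ℝ] n :=
  B z ∘ₗ j z' - B z' ∘ₗ j z + (j z ∘ₗ B z' - B z' ∘ₗ j z) - j (γ z z')

theorem killing_add_add_add (hanti : ∀ x : n, l x x = 0)
    (hZ : ∀ x : n, x ∈ Z ↔ ∀ y : n, l x y = 0) (h2 : ∀ x y : n, l x y ∈ Z)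
    (hj : ∀ z x y : n, ⟪j z x, y⟫ = ⟪z, l x y⟫)
    (hnab : ∀ x y w : n, 2 * ⟪nabla x y, w⟫ = ⟪l x y, w⟫ + ⟪l w x, y⟫ + ⟪l w y, x⟫)
    (hBskew : ∀ z ∈ Z, ∀ a b : n, ⟪B z a, b⟫ = -⟪a, B z b⟫)
    (hγalt : ∀ z : n, γ z z = 0)
    (hγtot : ∀ z ∈ Z, ∀ z' ∈ Z, ∀ z'' ∈ Z, ⟪γ z z', z''⟫ = -⟪γ z z'', z'⟫)
    (hα3 : ∀ x ∈ Zᗮ, ∀ y ∈ Zᗮ, ∀ w ∈ Zᗮ, α ![x, y, w] = 0)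
    (hα1 : ∀ x ∈ Zᗮ, ∀ z ∈ Z, ∀ z' ∈ Z, α ![x, z, z'] = 0)
    (hα2 : ∀ x ∈ Zᗮ, ∀ y ∈ Zᗮ, ∀ z ∈ Z, α ![x, y, z] = ⟪B z x, y⟫)
    (hα0 : ∀ z ∈ Z, ∀ z' ∈ Z, ∀ z'' ∈ Z, α ![z, z', z''] = ⟪γ z z', z''⟫)
    ⦃z x w a w' b : n⦄ (hz : z ∈ Z) (hx : x ∈ Zᗮ) (hw : w ∈ Z) (ha : a ∈ Zᗮ)
    (hw' : w' ∈ Z) (hb : b ∈ Zᗮ) :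
    α ![nabla (z + x) (z + x), w + a, w' + b] + α ![z + x, nabla (z + x) (w + a), w' + b] +
        α ![z + x, w + a, nabla (z + x) (w' + b)] =
      2⁻¹ * (⟪B (l x b) x, a⟫ - ⟪B (l x a) x, b⟫ + ⟪killingDefect B j γ z z a, b⟫ -
        ⟪killingDefect B j γ w w' x, x⟫ + ⟪killingDefect B j γ z w' x, a⟫ -
        ⟪killingDefect B j γ z w x, b⟫) := by
  have hjv := j_apply_mem_orthogonal hanti hZ hj
  have nabla_mem {c : n} (hc : c ∈ Zᗮ) (v : n) :
      -(2⁻¹ : ℝ) • (j v x + j z c) ∈ Zᗮ := Zᗮ.smul_mem _ (add_mem (hjv v x) (hjv z c))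
  have nab := nabla_add_add hanti hZ h2 hj hnab
  have alt := alternatingMap_add_add_add hα3 hα1 hα2 hα0
  rw [nab hz hz hx hx, nab hz hw hx ha, nab hz hw' hx hb,
    alt (Z.smul_mem _ (h2 x x)) (nabla_mem hx z) hw ha hw' hb,
    alt hz hx (Z.smul_mem _ (h2 x a)) (nabla_mem ha w) hw' hb,
    alt hz hx hw ha (Z.smul_mem _ (h2 x b)) (nabla_mem hb w')]
  simp only [killingDefect, hanti, hγalt, j_zero hj, LinearMap.sub_apply, LinearMap.add_apply,
    LinearMap.comp_apply, LinearMap.zero_apply, LinearMap.smul_apply, map_add, map_smul, map_zero,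
    smul_zero, inner_add_left, inner_add_right, inner_sub_left, real_inner_smul_left,
    real_inner_smul_right, inner_zero_left]
  have inner_B {v : n} (hv : v ∈ Z) (c d : n) : ⟪B v c, d⟫ = -⟪B v d, c⟫ := by
    rw [hBskew v hv, real_inner_comm]
  have inner_j := inner_j_apply_eq_neg hanti hj
  have inner_j_self (v : n) : ⟪j v x, x⟫ = 0 := by
    linarith [inner_j v x x, real_inner_comm x (j v x)]
  rw [inner_j z (B z a), inner_B hw (j w' x), inner_B hw' (j w x), inner_j w (B w' x),
    inner_j_self, inner_B hz (j w' x), inner_j z (B w' x), hj (γ z w'),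
    ← neg_neg ⟪γ z w', l x a⟫, ← hγtot z hz _ (h2 x a) w' hw', inner_j z (B w x), hj (γ z w)]
  ring

theorem killingDefect_zero_left (hj : ∀ z x y : n, ⟪j z x, y⟫ = ⟪z, l x y⟫) (w : n) :
    killingDefect B j γ 0 w = 0 := by
  simp only [killingDefect, j_zero hj, map_zero, LinearMap.zero_apply, LinearMap.zero_comp,
    LinearMap.comp_zero, sub_self, add_zero]

theorem killingDefect_apply_of_mem (hZ : ∀ x : n, x ∈ Z ↔ ∀ y : n, l x y = 0)
    (hj : ∀ z x y : n, ⟪j z x, y⟫ = ⟪z, l x y⟫) (hBZ : ∀ z ∈ Z, ∀ w ∈ Z, B z w = 0)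
    (z : n) {z' u : n} (hz' : z' ∈ Z) (hu : u ∈ Z) : killingDefect B j γ z z' u = 0 := by
  simp only [killingDefect, LinearMap.sub_apply, LinearMap.add_apply, LinearMap.comp_apply,
    j_apply_eq_zero_of_mem hZ hj _ hu, hBZ z' hz' u hu, map_zero, sub_zero, add_zero]

theorem killingDefect_mem_orthogonal (hanti : ∀ x : n, l x x = 0)
    (hZ : ∀ x : n, x ∈ Z ↔ ∀ y : n, l x y = 0) (hj : ∀ z x y : n, ⟪j z x, y⟫ = ⟪z, l x y⟫)
    (hBV : ∀ z ∈ Z, ∀ x ∈ Zᗮ, B z x ∈ Zᗮ) {z z' : n} (hz : z ∈ Z) (hz' : z' ∈ Z)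
    (x : n) : killingDefect B j γ z z' x ∈ Zᗮ := by
  have hjv := j_apply_mem_orthogonal hanti hZ hj
  exact Zᗮ.sub_mem (Zᗮ.add_mem (Zᗮ.sub_mem (hBV z hz _ (hjv _ _)) (hBV z' hz' _ (hjv _ _)))
    (Zᗮ.sub_mem (hjv _ _) (hBV z' hz' _ (hjv _ _)))) (hjv _ _)

theorem killingDefect_eq_zero_of_inner [FiniteDimensional ℝ n] (hanti : ∀ x : n, l x x = 0)
    (hZ : ∀ x : n, x ∈ Z ↔ ∀ y : n, l x y = 0) (hj : ∀ z x y : n, ⟪j z x, y⟫ = ⟪z, l x y⟫)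
    (hBV : ∀ z ∈ Z, ∀ x ∈ Zᗮ, B z x ∈ Zᗮ) (hBZ : ∀ z ∈ Z, ∀ w ∈ Z, B z w = 0)
    {z z' : n} (hz : z ∈ Z) (hz' : z' ∈ Z)
    (h : ∀ x ∈ Zᗮ, ∀ a ∈ Zᗮ, ⟪killingDefect B j γ z z' x, a⟫ = 0) :
    killingDefect B j γ z z' = 0 := by
  ext u
  obtain ⟨w, hw, x, hx, rfl⟩ := Z.exists_add_mem_mem_orthogonal u
  have hD := killingDefect_mem_orthogonal (γ := γ) hanti hZ hj hBV hz hz' x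
  rw [map_add, killingDefect_apply_of_mem hZ hj hBZ z hz' hw, zero_add, LinearMap.zero_apply,
    ← inner_self_eq_zero (𝕜 := ℝ)]
  exact h x hx _ hD

theorem sum_inner_j_mul_inner_B {ι : Type*} [Fintype ι] (h2 : ∀ x y : n, l x y ∈ Z)
    (hj : ∀ z x y : n, ⟪j z x, y⟫ = ⟪z, l x y⟫) (zb : OrthonormalBasis ι ℝ Z) (x a b : n) :
    ∑ t, ⟪j (zb t : n) x, a⟫ * ⟪B (zb t : n) x, b⟫ = ⟪B (l x a) x, b⟫ := by
  rw [← zb.sum_inner_smul_map_of_mem B (h2 x a)]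
  simp only [LinearMap.sum_apply, LinearMap.smul_apply, sum_inner, real_inner_smul_left, hj]

theorem inner_B_bracket_add_add (hanti : ∀ x : n, l x x = 0)
    (hZ : ∀ x : n, x ∈ Z ↔ ∀ y : n, l x y = 0) (h2 : ∀ x y : n, l x y ∈ Z)
    (hBV : ∀ z ∈ Z, ∀ x ∈ Zᗮ, B z x ∈ Zᗮ) {x w a w' : n} (hx : x ∈ Zᗮ) (hw : w ∈ Z)
    (hw' : w' ∈ Z) (b : n) : ⟪B (l x (w + a)) x, w' + b⟫ = ⟪B (l x a) x, b⟫ := by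
  rw [map_add, bracket_eq_zero_of_mem_right hanti hZ x hw, zero_add, inner_add_right,
    Submodule.inner_left_of_mem_orthogonal hw' (hBV _ (h2 x a) x hx), zero_add]

end TwoStepNilpotent

open TwoStepNilpotent

theorem killing_stmt13_general {n : Type*} [NormedAddCommGroup n] [InnerProductSpace ℝ n]
    [FiniteDimensional ℝ n]
    (l : n →ₗ[ℝ] n →ₗ[ℝ] n) (hanti : ∀ x : n, l x x = 0)
    (Z : Submodule ℝ n) (hZ : ∀ x : n, x ∈ Z ↔ ∀ y : n, l x y = 0)
    (h2 : ∀ x y : n, l x y ∈ Z)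
    (j : n → n →ₗ[ℝ] n) (hj : ∀ z x y : n, ⟪j z x, y⟫ = ⟪z, l x y⟫)
    -- the Levi-Civita connection, via the Koszul formula
    (nabla : n →ₗ[ℝ] n →ₗ[ℝ] n)
    (hnab : ∀ x y w : n, 2 * ⟪nabla x y, w⟫ = ⟪l x y, w⟫ + ⟪l w x, y⟫ + ⟪l w y, x⟫)
    -- an orthonormal basis of the center
    (m : ℕ) (zb : OrthonormalBasis (Fin m) ℝ Z)
    -- β : z → so(v), extended by zero
    (B : n →ₗ[ℝ] n →ₗ[ℝ] n)
    (hBskew : ∀ z ∈ Z, ∀ a b : n, ⟪B z a, b⟫ = -⟪a, B z b⟫)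
    (hBV : ∀ z ∈ Z, ∀ x ∈ Zᗮ, B z x ∈ Zᗮ) (hBZ : ∀ z ∈ Z, ∀ w ∈ Z, B z w = 0)
    -- γ ∈ Λ³z*, viewed as a skew bilinear map z × z → z
    (γ : n →ₗ[ℝ] n →ₗ[ℝ] n)
    (hγalt : ∀ z : n, γ z z = 0)
    (hγtot : ∀ z ∈ Z, ∀ z' ∈ Z, ∀ z'' ∈ Z, ⟪γ z z', z''⟫ = -⟪γ z z'', z'⟫)
    -- the 3-form α = β + γ
    (α : AlternatingMap ℝ n ℝ (Fin 3))
    (hα3 : ∀ x ∈ Zᗮ, ∀ y ∈ Zᗮ, ∀ w ∈ Zᗮ, α ![x, y, w] = 0)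
    (hα1 : ∀ x ∈ Zᗮ, ∀ z ∈ Z, ∀ z' ∈ Z, α ![x, z, z'] = 0)
    (hα2 : ∀ x ∈ Zᗮ, ∀ y ∈ Zᗮ, ∀ z ∈ Z, α ![x, y, z] = ⟪B z x, y⟫)
    (hα0 : ∀ z ∈ Z, ∀ z' ∈ Z, ∀ z'' ∈ Z, α ![z, z', z''] = ⟪γ z z', z''⟫) :
    -- α is Killing (y ⌟ ∇_y α = 0) iff (i) and (ii) hold
    (∀ y a b : n,
        α ![nabla y y, a, b] + α ![y, nabla y a, b] + α ![y, a, nabla y b] = 0) ↔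
      ((∀ z ∈ Z, ∀ z' ∈ Z,
          (B z) ∘ₗ (j z') - (B z') ∘ₗ (j z) + ((j z) ∘ₗ (B z') - (B z') ∘ₗ (j z))
            = j (γ z z')) ∧
        (∀ x ∈ Zᗮ, ∀ a b : n,
          ∑ t : Fin m,
            (⟪j (zb t : n) x, a⟫ * ⟪B (zb t : n) x, b⟫ -
             ⟪j (zb t : n) x, b⟫ * ⟪B (zb t : n) x, a⟫) = 0)) := by
  have expand := killing_add_add_add (nabla := nabla) (α := α) hanti hZ h2 hj hnab hBskew hγalt
    hγtot hα3 hα1 hα2 hα0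
  simp only [Finset.sum_sub_distrib, sum_inner_j_mul_inner_B h2 hj zb, sub_eq_zero]
  constructor
  · intro H
    refine ⟨fun z hz z' hz' => sub_eq_zero.mp ?_, fun x hx a b => ?_⟩
    · refine killingDefect_eq_zero_of_inner hanti hZ hj hBV hBZ hz hz' fun x hx a ha => ?_
      have killing := H (z + x) (0 + a) (z' + 0)
      rw [expand hz hx Z.zero_mem ha hz' Zᗮ.zero_mem] at killing
      simpa [killingDefect_zero_left hj] using killing
    · obtain ⟨w, hw, a, ha, rfl⟩ := Z.exists_add_mem_mem_orthogonal a
      obtain ⟨w', hw', b, hb, rfl⟩ := Z.exists_add_mem_mem_orthogonal b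
      rw [inner_B_bracket_add_add hanti hZ h2 hBV hx hw hw',
        inner_B_bracket_add_add hanti hZ h2 hBV hx hw' hw]
      have killing := H (0 + x) (0 + a) (0 + b)
      rw [expand Z.zero_mem hx Z.zero_mem ha Z.zero_mem hb] at killing
      simp only [killingDefect_zero_left hj, LinearMap.zero_apply, inner_zero_left, add_zero,
        sub_zero, mul_eq_zero, inv_eq_zero, OfNat.ofNat_ne_zero, false_or] at killing
      linarith
  · rintro ⟨hi, hii⟩ y a b
    obtain ⟨z, hz, x, hx, rfl⟩ := Z.exists_add_mem_mem_orthogonal y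
    obtain ⟨w, hw, a, ha, rfl⟩ := Z.exists_add_mem_mem_orthogonal a
    obtain ⟨w', hw', b, hb, rfl⟩ := Z.exists_add_mem_mem_orthogonal b
    have hD {v v' : n} (hv : v ∈ Z) (hv' : v' ∈ Z) : killingDefect B j γ v v' = 0 :=
      sub_eq_zero.mpr (hi v hv v' hv')
    rw [expand hz hx hw ha hw' hb, hD hz hz, hD hw hw', hD hz hw', hD hz hw, hii x hx b a]
    simp

/-- A 3-form `α = β + γ` (with `β : z → so(v)`, `γ ∈ Λ³z*`) on a 2-step
nilpotent metric Lie algebra is a Killing 3-form if and only if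
(i) `β(z) j(z') − β(z') j(z) + [j(z), β(z')] = j(γ(z,z'))` for all `z, z' ∈ z`, and
(ii) `Σ_t j(z_t) x ∧ β(z_t) x = 0` for all `x ∈ v`, where `{z_t}` is an orthonormal basis
of `z`. -/
theorem killing_stmt13 {n : Type*} [NormedAddCommGroup n] [InnerProductSpace ℝ n]
    [FiniteDimensional ℝ n]
    (l : n →ₗ[ℝ] n →ₗ[ℝ] n) (hanti : ∀ x : n, l x x = 0)
    (Z : Submodule ℝ n) (hZ : ∀ x : n, x ∈ Z ↔ ∀ y : n, l x y = 0)
    (h2 : ∀ x y : n, l x y ∈ Z) (hna : ∃ x : n, ∃ y : n, l x y ≠ 0)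
    (j : n → n →ₗ[ℝ] n) (hj : ∀ z x y : n, ⟪j z x, y⟫ = ⟪z, l x y⟫)
    -- the Levi-Civita connection, via the Koszul formula
    (nabla : n →ₗ[ℝ] n →ₗ[ℝ] n)
    (hnab : ∀ x y w : n, 2 * ⟪nabla x y, w⟫ = ⟪l x y, w⟫ + ⟪l w x, y⟫ + ⟪l w y, x⟫)
    -- an orthonormal basis of the center
    (m : ℕ) (zb : OrthonormalBasis (Fin m) ℝ Z)
    -- β : z → so(v), extended by zero
    (B : n →ₗ[ℝ] n →ₗ[ℝ] n)
    (hBskew : ∀ z ∈ Z, ∀ a b : n, ⟪B z a, b⟫ = -⟪a, B z b⟫)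
    (hBV : ∀ z ∈ Z, ∀ x ∈ Zᗮ, B z x ∈ Zᗮ) (hBZ : ∀ z ∈ Z, ∀ w ∈ Z, B z w = 0)
    -- γ ∈ Λ³z*, viewed as a skew bilinear map z × z → z
    (γ : n →ₗ[ℝ] n →ₗ[ℝ] n)
    (hγZ : ∀ z ∈ Z, ∀ z' ∈ Z, γ z z' ∈ Z) (hγalt : ∀ z : n, γ z z = 0)
    (hγtot : ∀ z ∈ Z, ∀ z' ∈ Z, ∀ z'' ∈ Z, ⟪γ z z', z''⟫ = -⟪γ z z'', z'⟫)
    -- the 3-form α = β + γ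
    (α : AlternatingMap ℝ n ℝ (Fin 3))
    (hα3 : ∀ x ∈ Zᗮ, ∀ y ∈ Zᗮ, ∀ w ∈ Zᗮ, α ![x, y, w] = 0)
    (hα1 : ∀ x ∈ Zᗮ, ∀ z ∈ Z, ∀ z' ∈ Z, α ![x, z, z'] = 0)
    (hα2 : ∀ x ∈ Zᗮ, ∀ y ∈ Zᗮ, ∀ z ∈ Z, α ![x, y, z] = ⟪B z x, y⟫)
    (hα0 : ∀ z ∈ Z, ∀ z' ∈ Z, ∀ z'' ∈ Z, α ![z, z', z''] = ⟪γ z z', z''⟫) :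
    -- α is Killing (y ⌟ ∇_y α = 0) iff (i) and (ii) hold
    (∀ y a b : n,
        α ![nabla y y, a, b] + α ![y, nabla y a, b] + α ![y, a, nabla y b] = 0) ↔
      ((∀ z ∈ Z, ∀ z' ∈ Z,
          (B z) ∘ₗ (j z') - (B z') ∘ₗ (j z) + ((j z) ∘ₗ (B z') - (B z') ∘ₗ (j z))
            = j (γ z z')) ∧
        (∀ x ∈ Zᗮ, ∀ a b : n,
          ∑ t : Fin m,
            (⟪j (zb t : n) x, a⟫ * ⟪B (zb t : n) x, b⟫ -
             ⟪j (zb t : n) x, b⟫ * ⟪B (zb t : n) x, a⟫) = 0)) :=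
  killing_stmt13_general l hanti Z hZ h2 j hj nabla hnab m zb B hBskew hBV hBZ γ hγalt hγtot α hα3
    hα1 hα2 hα0
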